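/- Let φ: ℝ^d → ℝ be convex and differentiable with λ_min(∇²φ(x)) ≥ α(1 + ‖x‖₂)^a for all x (in particular strong convexity with α > 0, a ≥ 0, so that ‖∇φ(x)‖₂ ≥ α‖x‖₂ - ‖∇φ(0)‖₂). Let P, Q be probability measures on ℝ^d with (∇φ)_# P = Q. If E_Q[‖Y‖₂^{m/(a+1)}] < ∞ for some m > 0, then E_P[‖X‖₂^m] < ∞. -/

import Mathlib

open MeasureTheory Metric Real
open scoped RealInnerProductSpace

private lemma aux_add_rpow_le {s t p : ℝ} (hs : 0 ≤ s) (ht : 0 ≤ t) (hp : 0 ≤ p) :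
    (s + t) ^ p ≤ 2 ^ p * (s ^ p + t ^ p) := by
  have h1 : s + t ≤ 2 * max s t := by
    rcases le_total s t with h | h
    · rw [max_eq_right h]; linarith
    · rw [max_eq_left h]; linarith
  calc (s + t) ^ p ≤ (2 * max s t) ^ p :=
        Real.rpow_le_rpow (by positivity) h1 hp
    _ = 2 ^ p * (max s t) ^ p := Real.mul_rpow (by norm_num) (le_trans hs (le_max_left s t))
    _ ≤ 2 ^ p * (s ^ p + t ^ p) := by
        have h2 : (max s t) ^ p ≤ s ^ p + t ^ p := by
          rcases le_total s t with h | h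
          · rw [max_eq_right h]
            have := Real.rpow_nonneg hs p
            linarith
          · rw [max_eq_left h]
            have := Real.rpow_nonneg ht p
            linarith
        have h3 : (0:ℝ) ≤ 2 ^ p := Real.rpow_nonneg (by norm_num) p
        nlinarith

private lemma grad_lower (d : ℕ) (φ : EuclideanSpace ℝ (Fin d) → ℝ) (α a : ℝ) (hα : 0 < α) (ha : 0 ≤ a)
    (hC2 : ContDiff ℝ 2 φ)
    (hHess : ∀ x v, α * (1 + ‖x‖) ^ a * ‖v‖ ^ 2 ≤ ⟪fderiv ℝ (gradient φ) x v, v⟫)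
    (x : EuclideanSpace ℝ (Fin d)) :
    α / 2 ^ (a + 1) * ‖x‖ ^ (a + 1) ≤ ‖gradient φ x‖ + ‖gradient φ 0‖ := by
  have ha1 : (0:ℝ) < a + 1 := by linarith
  rcases eq_or_ne x 0 with rfl | hx
  · rw [norm_zero, Real.zero_rpow (ne_of_gt ha1), mul_zero]
    positivity
  have hxpos : (0:ℝ) < ‖x‖ := norm_pos_iff.mpr hx
  have hgd : Differentiable ℝ (gradient φ) := by
    have h1 : ContDiff ℝ 1 (fderiv ℝ φ) := hC2.fderiv_right (by norm_num)
    have h2 : gradient φ = fun y => (InnerProductSpace.toDual ℝ _).symm (fderiv ℝ φ y) := rfl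
    rw [h2]
    exact ((InnerProductSpace.toDual ℝ _).symm.differentiable).comp (h1.differentiable one_ne_zero)
  set h : ℝ → ℝ := fun t => ⟪gradient φ (t • x), x⟫ with hh
  have hderiv : ∀ t : ℝ, HasDerivAt h ⟪fderiv ℝ (gradient φ) (t • x) x, x⟫ t := by
    intro t
    have hsm : HasDerivAt (fun s : ℝ => s • x) x t := by
      simpa using (hasDerivAt_id t).smul_const x
    have hc : HasDerivAt (fun s : ℝ => gradient φ (s • x)) (fderiv ℝ (gradient φ) (t • x) x) t :=
      by have h' := (hgd (t • x)).hasFDerivAt; exact h'.comp_hasDerivAt t hsm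
    have := hc.inner ℝ (hasDerivAt_const t x)
    simpa only [inner_zero_right, inner_zero_left, add_zero, zero_add] using this
  have hcont : Continuous h :=
    continuous_iff_continuousAt.mpr fun t => (hderiv t).continuousAt
  have hd0 : ∀ t : ℝ, 0 ≤ ⟪fderiv ℝ (gradient φ) (t • x) x, x⟫ := by
    intro t
    refine le_trans ?_ (hHess (t • x) x)
    positivity
  have hdhalf : ∀ t : ℝ, 1/2 ≤ t →
      α * (1 + ‖x‖ / 2) ^ a * ‖x‖ ^ 2 ≤ ⟪fderiv ℝ (gradient φ) (t • x) x, x⟫ := by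
    intro t htt
    refine le_trans ?_ (hHess (t • x) x)
    have h1 : 1 + ‖x‖ / 2 ≤ 1 + ‖t • x‖ := by
      rw [norm_smul, Real.norm_eq_abs]
      have h2 : (1:ℝ)/2 ≤ |t| := le_trans htt (le_abs_self t)
      nlinarith [hxpos.le]
    have h3 := Real.rpow_le_rpow (by positivity) h1 ha
    exact mul_le_mul_of_nonneg_right (mul_le_mul_of_nonneg_left h3 hα.le) (sq_nonneg _)
  have hmvt1 : 0 ≤ h (1/2) - h 0 := by
    obtain ⟨c, hc, hceq⟩ := exists_hasDerivAt_eq_slope h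
      (fun t => ⟪fderiv ℝ (gradient φ) (t • x) x, x⟫) (by norm_num : (0:ℝ) < 1/2)
      hcont.continuousOn (fun t _ => hderiv t)
    have h4 := hd0 c
    rw [hceq] at h4
    have h5 := (le_div_iff₀ (by norm_num : (0:ℝ) < 1/2 - 0)).mp h4
    linarith
  have hmvt2 : α * (1 + ‖x‖ / 2) ^ a * ‖x‖ ^ 2 / 2 ≤ h 1 - h (1/2) := by
    obtain ⟨c, hc, hceq⟩ := exists_hasDerivAt_eq_slope h
      (fun t => ⟪fderiv ℝ (gradient φ) (t • x) x, x⟫) (by norm_num : (1:ℝ)/2 < 1)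
      hcont.continuousOn (fun t _ => hderiv t)
    have hb := hdhalf c (le_of_lt hc.1)
    rw [hceq] at hb
    have h5 := (le_div_iff₀ (by norm_num : (0:ℝ) < 1 - 1/2)).mp hb
    linarith
  have hkey : α * (1 + ‖x‖ / 2) ^ a * ‖x‖ ^ 2 / 2 ≤ ⟪gradient φ x - gradient φ 0, x⟫ := by
    have h1 : h 1 = ⟪gradient φ x, x⟫ := by simp [hh]
    have h0 : h 0 = ⟪gradient φ 0, x⟫ := by simp [hh]
    rw [inner_sub_left, ← h1, ← h0]
    linarith
  have hcs : ⟪gradient φ x - gradient φ 0, x⟫ ≤ (‖gradient φ x‖ + ‖gradient φ 0‖) * ‖x‖ :=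
    le_trans (real_inner_le_norm _ _)
      (mul_le_mul_of_nonneg_right (norm_sub_le _ _) (norm_nonneg x))
  have hpow1 : (1 + ‖x‖) ^ a / 2 ^ a ≤ (1 + ‖x‖ / 2) ^ a := by
    rw [← Real.div_rpow (by positivity) (by norm_num)]
    apply Real.rpow_le_rpow (by positivity) (by linarith) ha
  have hpow2 : ‖x‖ ^ (a + 1) ≤ (1 + ‖x‖) ^ a * ‖x‖ := by
    rw [Real.rpow_add hxpos, Real.rpow_one]
    exact mul_le_mul_of_nonneg_right
      (Real.rpow_le_rpow (norm_nonneg x) (by linarith) ha) (norm_nonneg x)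
  have h2a : (2:ℝ) ^ (a + 1) = 2 ^ a * 2 := by
    rw [Real.rpow_add (by norm_num), Real.rpow_one]
  have h2apos : (0:ℝ) < 2 ^ a := Real.rpow_pos_of_pos (by norm_num) a
  have hmain : α * ((1 + ‖x‖) ^ a / 2 ^ a) * ‖x‖ ^ 2 / 2 ≤ (‖gradient φ x‖ + ‖gradient φ 0‖) * ‖x‖ := by
    have h6 : α * ((1 + ‖x‖) ^ a / 2 ^ a) * ‖x‖ ^ 2 / 2 ≤ α * (1 + ‖x‖ / 2) ^ a * ‖x‖ ^ 2 / 2 := by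
      gcongr
    linarith [le_trans hkey hcs]
  have hdiv : α / 2 ^ (a + 1) * ((1 + ‖x‖) ^ a * ‖x‖) ≤ ‖gradient φ x‖ + ‖gradient φ 0‖ := by
    rw [h2a]
    have hEq : α * ((1 + ‖x‖) ^ a / 2 ^ a) * ‖x‖ ^ 2 / 2
        = (α / (2 ^ a * 2) * ((1 + ‖x‖) ^ a * ‖x‖)) * ‖x‖ := by
      field_simp
    rw [hEq] at hmain
    exact le_of_mul_le_mul_right hmain hxpos
  calc α / 2 ^ (a + 1) * ‖x‖ ^ (a + 1)
      ≤ α / 2 ^ (a + 1) * ((1 + ‖x‖) ^ a * ‖x‖) := by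
        have : (0:ℝ) < 2 ^ (a+1) := Real.rpow_pos_of_pos (by norm_num) _
        exact mul_le_mul_of_nonneg_left hpow2 (by positivity)
    _ ≤ _ := hdiv


/-- Part (ii) of the reversed Caffarelli contraction theorem: if `φ` is convex,
differentiable and `(α,a)`-convex (smallest Hessian eigenvalue at least
`α (1+‖x‖)^a`), `∇φ` pushes `P` forward to `Q`, and `Q` has finite
`m/(a+1)`-th moment, then `P` has finite `m`-th moment. -/
theorem stmt_4 (d : ℕ) (φ : EuclideanSpace ℝ (Fin d) → ℝ)
    (α a m : ℝ) (hα : 0 < α) (ha : 0 ≤ a) (hm : 0 < m)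
    (hconv : ConvexOn ℝ Set.univ φ)
    (hdiff : Differentiable ℝ φ)
    (hC2 : ContDiff ℝ 2 φ)
    (hHess : ∀ x v, α * (1 + ‖x‖) ^ a * ‖v‖ ^ 2 ≤ ⟪fderiv ℝ (gradient φ) x v, v⟫)
    (P Q : Measure (EuclideanSpace ℝ (Fin d)))
    [IsProbabilityMeasure P] [IsProbabilityMeasure Q]
    (hpush : Measure.map (gradient φ) P = Q)
    (hmomQ : Integrable (fun y => ‖y‖ ^ (m / (a + 1))) Q) :
    Integrable (fun x => ‖x‖ ^ m) P := by
  set p : ℝ := m / (a + 1) with hpdef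
  have ha1 : (0:ℝ) < a + 1 := by linarith
  have hp : 0 < p := div_pos hm ha1
  set c : ℝ := α / 2 ^ (a + 1) with hcdef
  have hc : 0 < c := by
    have : (0:ℝ) < 2 ^ (a + 1) := Real.rpow_pos_of_pos (by norm_num) _
    positivity
  set K : ℝ := ‖gradient φ 0‖ with hKdef
  have hK : 0 ≤ K := norm_nonneg _
  -- gradient is continuous
  have hgd : Differentiable ℝ (gradient φ) := by
    have h1 : ContDiff ℝ 1 (fderiv ℝ φ) := hC2.fderiv_right (by norm_num)
    have h2 : gradient φ = fun y => (InnerProductSpace.toDual ℝ _).symm (fderiv ℝ φ y) := rfl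
    rw [h2]
    exact ((InnerProductSpace.toDual ℝ _).symm.differentiable).comp (h1.differentiable one_ne_zero)
  have hgc : Continuous (gradient φ) := hgd.continuous
  have hfp : Continuous (fun y : EuclideanSpace ℝ (Fin d) => ‖y‖ ^ p) :=
    continuous_norm.rpow_const fun y => Or.inr hp.le
  -- transfer the moment from Q to P
  have hint : Integrable (fun x => ‖gradient φ x‖ ^ p) P := by
    have h1 : Integrable (fun y => ‖y‖ ^ p) (Measure.map (gradient φ) P) := hpush.symm ▸ hmomQ
    have h2 := (integrable_map_measure hfp.aestronglyMeasurable hgc.aemeasurable).mp h1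
    exact h2
  -- integrable dominating function
  set C : ℝ := 2 ^ p / c ^ p with hCdef
  have hCpos : 0 ≤ C := by
    have h1 : (0:ℝ) < c ^ p := Real.rpow_pos_of_pos hc p
    have h2 : (0:ℝ) ≤ 2 ^ p := Real.rpow_nonneg (by norm_num) p
    positivity
  have hg : Integrable (fun x => C * ‖gradient φ x‖ ^ p + C * K ^ p) P :=
    (hint.const_mul C).add (integrable_const _)
  -- pointwise bound
  have hbound : ∀ x : EuclideanSpace ℝ (Fin d),
      ‖x‖ ^ m ≤ C * ‖gradient φ x‖ ^ p + C * K ^ p := by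
    intro x
    have hgl := grad_lower d φ α a hα ha hC2 hHess x
    have h1 : ‖x‖ ^ (a + 1) ≤ (‖gradient φ x‖ + K) / c := by
      rw [le_div_iff₀ hc]
      calc ‖x‖ ^ (a + 1) * c = c * ‖x‖ ^ (a + 1) := by ring
        _ ≤ _ := hgl
    have hm_eq : (a + 1) * p = m := by
      rw [hpdef]
      field_simp
    have h2 : ‖x‖ ^ m = (‖x‖ ^ (a + 1)) ^ p := by
      rw [← Real.rpow_mul (norm_nonneg x)] at *
      rw [hm_eq]
    have h3 : (‖x‖ ^ (a + 1)) ^ p ≤ ((‖gradient φ x‖ + K) / c) ^ p :=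
      Real.rpow_le_rpow (Real.rpow_nonneg (norm_nonneg x) _) h1 hp.le
    have h4 : ((‖gradient φ x‖ + K) / c) ^ p = (‖gradient φ x‖ + K) ^ p / c ^ p :=
      Real.div_rpow (by positivity) hc.le p
    have h5 : (‖gradient φ x‖ + K) ^ p ≤ 2 ^ p * (‖gradient φ x‖ ^ p + K ^ p) :=
      aux_add_rpow_le (norm_nonneg _) hK hp.le
    have hcp : (0:ℝ) < c ^ p := Real.rpow_pos_of_pos hc p
    calc ‖x‖ ^ m = (‖x‖ ^ (a + 1)) ^ p := h2
      _ ≤ (‖gradient φ x‖ + K) ^ p / c ^ p := by rw [← h4]; exact h3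
      _ ≤ 2 ^ p * (‖gradient φ x‖ ^ p + K ^ p) / c ^ p := by
          gcongr
      _ = C * ‖gradient φ x‖ ^ p + C * K ^ p := by
          rw [hCdef]; field_simp
  have hmeas : AEStronglyMeasurable (fun x : EuclideanSpace ℝ (Fin d) => ‖x‖ ^ m) P :=
    (continuous_norm.rpow_const fun y => Or.inr hm.le).aestronglyMeasurable
  refine Integrable.mono' hg hmeas (Filter.Eventually.of_forall fun x => ?_)
  rw [Real.norm_eq_abs, abs_of_nonneg (Real.rpow_nonneg (norm_nonneg x) m)]
  exact hbound x
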